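/- arXiv:2212.14005 — 2 statements merged into one kernel-verified Lean document; each statement's English description precedes it below -/
import Mathlib

section
/- Let P be a finite set, K a collection of subsets of P with toggle Markov chain T(K, x) irreducible, and fix probabilities p_x > 0 for each x ∈ P. Then the stationary distribution of T(K, x) assigns to each A ∈ K the probability (1/Z) ∏_{x ∈ A} p_x^{-1}, where Z = Σ_{A' ∈ K} ∏_{x' ∈ A'} p_{x'}^{-1}. -/
open Finset

variable {α : Type*} [Fintype α] [DecidableEq α]

/-- The toggle `τ_z` on a collection `K` of subsets of `P`. -/
def toggle (K : Finset (Finset α)) (z : α) (A : Finset α) : Finset α :=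
  if symmDiff A {z} ∈ K then symmDiff A {z} else A

/-- Apply the toggles indexed by the list `l`, in order (leftmost first). -/
def toggleSeq (K : Finset (Finset α)) (l : List α) (A : Finset α) : Finset α :=
  l.foldl (fun B z => toggle K z B) A

/-- The transition probability of the toggle Markov chain `T(K, x)` from `A` to `A'`:
a subset `U ⊆ A` of skipped elements is chosen, each `u ∈ A` being skipped
independently with probability `1 - p u`, and the chain moves to the state obtained
from `A` by applying the toggles `τ_z` for `z ∉ U` in the order given by the list `l`. -/
noncomputable def transProb (K : Finset (Finset α)) (l : List α) (p : α → ℝ)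
    (A A' : Finset α) : ℝ :=
  ∑ U ∈ A.powerset,
    if toggleSeq K (l.filter (· ∉ U)) A = A' then
      (∏ u ∈ U, (1 - p u)) * ∏ z ∈ A \ U, p z
    else 0

/-!
Weighting a state `A'` by `∏_{z ∈ A'} (p z)⁻¹`, a skip set `U ⊆ A'` contributes
`∏_{u ∈ U} ((p u)⁻¹ - 1)` to the weighted flow out of `A'`. For a fixed `U`, the toggles outside
`U` compose to a bijection of `K` that never changes membership of elements of `U`, so exactly one
`A' ∈ K` with `U ⊆ A'` is sent to `A` if `U ⊆ A`, and none otherwise. The flow into `A` is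
therefore `∑_{U ⊆ A} ∏_{u ∈ U} ((p u)⁻¹ - 1) = ∏_{z ∈ A} (p z)⁻¹`.
-/

variable {β : Type*} [DecidableEq β] {K : Finset (Finset β)} {A : Finset β}

lemma toggle_mem (hA : A ∈ K) (z : β) : toggle K z A ∈ K := by
  unfold toggle
  split_ifs with h
  exacts [h, hA]

lemma toggle_toggle (hA : A ∈ K) (z : β) : toggle K z (toggle K z A) = A := by
  unfold toggle
  by_cases h : symmDiff A {z} ∈ K
  · simp [h, symmDiff_symmDiff_cancel_right, hA]
  · simp [h]

lemma mem_toggle_of_ne {w z : β} (hw : w ≠ z) : w ∈ toggle K z A ↔ w ∈ A := by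
  unfold toggle
  split_ifs
  · simp [mem_symmDiff, hw]
  · rfl

lemma toggleSeq_cons (a : β) (l : List β) :
    toggleSeq K (a :: l) A = toggleSeq K l (toggle K a A) := rfl

lemma toggleSeq_append (l₁ l₂ : List β) :
    toggleSeq K (l₁ ++ l₂) A = toggleSeq K l₂ (toggleSeq K l₁ A) :=
  List.foldl_append

lemma toggleSeq_mem (hA : A ∈ K) (l : List β) : toggleSeq K l A ∈ K := by
  induction l generalizing A with
  | nil => exact hA
  | cons a l ih => exact ih (toggle_mem hA a)

lemma toggleSeq_reverse_toggleSeq (hA : A ∈ K) (l : List β) :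
    toggleSeq K l.reverse (toggleSeq K l A) = A := by
  induction l generalizing A with
  | nil => rfl
  | cons a l ih =>
    rw [toggleSeq_cons, List.reverse_cons, toggleSeq_append, ih (toggle_mem hA a)]
    exact toggle_toggle hA a

lemma toggleSeq_eq_iff {A' : Finset β} (hA : A ∈ K) (hA' : A' ∈ K) (l : List β) :
    toggleSeq K l A' = A ↔ A' = toggleSeq K l.reverse A := by
  constructor
  · rintro rfl
    exact (toggleSeq_reverse_toggleSeq hA' l).symm
  · rintro rfl
    simpa using toggleSeq_reverse_toggleSeq hA l.reverse

lemma subset_toggleSeq_iff {U : Finset β} {l : List β} (hU : ∀ u ∈ U, u ∉ l) :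
    U ⊆ toggleSeq K l A ↔ U ⊆ A := by
  suffices ∀ u ∈ U, (u ∈ toggleSeq K l A ↔ u ∈ A) from
    forall₂_congr fun u hu => this u hu
  intro u hu
  induction l generalizing A with
  | nil => rfl
  | cons a l ih =>
    simp only [List.mem_cons, not_or] at hU
    rw [toggleSeq_cons, ih fun v hv => (hU v hv).2, mem_toggle_of_ne (hU u hu).1]

lemma sum_ite_toggleSeq_eq {M : Type*} [AddCommMonoid M] (hA : A ∈ K) (l : List β)
    (f : Finset β → M) :
    ∑ A' ∈ K, (if toggleSeq K l A' = A then f A' else 0) = f (toggleSeq K l.reverse A) := by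
  rw [sum_congr rfl fun A' hA' => if_congr (toggleSeq_eq_iff hA hA' l) rfl rfl, sum_ite_eq']
  exact if_pos (toggleSeq_mem hA _)

lemma sum_filter_subset_ite_toggleSeq_eq {M : Type*} [AddCommMonoid M] (hA : A ∈ K)
    {U : Finset β} {l : List β} (hU : ∀ u ∈ U, u ∉ l) (c : M) :
    ∑ A' ∈ K with U ⊆ A', (if toggleSeq K l A' = A then c else 0)
      = if U ⊆ A then c else 0 := by
  rw [sum_filter]
  calc ∑ A' ∈ K, (if U ⊆ A' then if toggleSeq K l A' = A then c else 0 else 0)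
      = ∑ A' ∈ K, if toggleSeq K l A' = A then (if U ⊆ A' then c else 0) else 0 :=
        sum_congr rfl fun _ _ => by simp only [← ite_and, and_comm]
    _ = if U ⊆ toggleSeq K l.reverse A then c else 0 := sum_ite_toggleSeq_eq hA l _
    _ = if U ⊆ A then c else 0 :=
        if_congr (subset_toggleSeq_iff fun u hu h => hU u hu (List.mem_reverse.1 h)) rfl rfl

lemma prod_inv_mul_prod_one_sub_mul_prod_sdiff {F : Type*} [Field F] {p : β → F}
    {U A : Finset β} (hU : U ⊆ A) (hp : ∀ z ∈ A, p z ≠ 0) :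
    (∏ z ∈ A, (p z)⁻¹) * ((∏ u ∈ U, (1 - p u)) * ∏ z ∈ A \ U, p z)
      = ∏ u ∈ U, ((p u)⁻¹ - 1) := by
  have hsdiff : (∏ z ∈ A \ U, (p z)⁻¹) * ∏ z ∈ A \ U, p z = 1 := by
    rw [← prod_mul_distrib]
    exact prod_eq_one fun z hz => inv_mul_cancel₀ (hp z (sdiff_subset hz))
  have hU' : ∏ u ∈ U, ((p u)⁻¹ - 1) = (∏ u ∈ U, (p u)⁻¹) * ∏ u ∈ U, (1 - p u) := by
    rw [← prod_mul_distrib]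
    exact prod_congr rfl fun u hu => by rw [mul_sub, mul_one, inv_mul_cancel₀ (hp u (hU hu))]
  rw [← prod_sdiff hU, hU']
  linear_combination (∏ u ∈ U, (p u)⁻¹) * (∏ u ∈ U, (1 - p u)) * hsdiff

lemma sum_prod_inv_mul_transProb [Fintype β] (l : List β) {p : β → ℝ} (hp : ∀ z, p z ≠ 0) (hA : A ∈ K) :
    ∑ A' ∈ K, (∏ z ∈ A', (p z)⁻¹) * transProb K l p A' A = ∏ z ∈ A, (p z)⁻¹ := by
  have hskip : ∀ U : Finset β, ∀ u ∈ U, u ∉ l.filter (· ∉ U) := by simp +contextual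
  calc ∑ A' ∈ K, (∏ z ∈ A', (p z)⁻¹) * transProb K l p A' A
      = ∑ A' ∈ K, ∑ U ∈ A'.powerset, if toggleSeq K (l.filter (· ∉ U)) A' = A then
          ∏ u ∈ U, ((p u)⁻¹ - 1) else 0 := by
        refine sum_congr rfl fun A' _ => ?_
        rw [transProb, mul_sum]
        refine sum_congr rfl fun U hU => ?_
        rw [mul_ite, mul_zero, prod_inv_mul_prod_one_sub_mul_prod_sdiff (mem_powerset.1 hU)
          fun z _ => hp z]
    _ = ∑ U, ∑ A' ∈ K with U ⊆ A', if toggleSeq K (l.filter (· ∉ U)) A' = A then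
          ∏ u ∈ U, ((p u)⁻¹ - 1) else 0 :=
        sum_comm' fun A' U => by simp [and_comm]
    _ = ∑ U, if U ⊆ A then ∏ u ∈ U, ((p u)⁻¹ - 1) else 0 :=
        sum_congr rfl fun U _ => sum_filter_subset_ite_toggleSeq_eq hA (hskip U) _
    _ = ∑ U ∈ A.powerset, ∏ u ∈ U, ((p u)⁻¹ - 1) := by
        rw [← sum_filter]; congr 1; ext; simp
    _ = ∏ z ∈ A, (p z)⁻¹ := by
        rw [← prod_one_add]; simp

theorem toggleMarkovChain_stationary_general
    (K : Finset (Finset α)) (l : List α)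
    (p : α → ℝ) (hp : ∀ z : α, 0 < p z ∧ p z ≤ 1) :
    ∀ A ∈ K,
      ∑ A' ∈ K, ((1 / ∑ B ∈ K, ∏ z ∈ B, (p z)⁻¹) * ∏ z ∈ A', (p z)⁻¹)
          * transProb K l p A' A
        = (1 / ∑ B ∈ K, ∏ z ∈ B, (p z)⁻¹) * ∏ z ∈ A, (p z)⁻¹ := by
  intro A hA
  simp_rw [mul_assoc, ← mul_sum]
  rw [sum_prod_inv_mul_transProb l (fun z => (hp z).1.ne') hA]

/-- The stationary distribution of an irreducible toggle Markov chain `T(K, x)` with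
probabilities `p z > 0` assigns to each `A ∈ K` the probability
`(1/Z) ∏_{z ∈ A} (p z)⁻¹`, where `Z = Σ_{A' ∈ K} ∏_{z' ∈ A'} (p z')⁻¹`. -/
theorem toggleMarkovChain_stationary
    (K : Finset (Finset α)) (l : List α) (hnd : l.Nodup) (hall : ∀ z : α, z ∈ l)
    (p : α → ℝ) (hp : ∀ z : α, 0 < p z ∧ p z ≤ 1)
    (hirr : ∀ A ∈ K, ∀ A' ∈ K, Relation.ReflTransGen
        (fun B B' : Finset α => B ∈ K ∧ B' ∈ K ∧ 0 < transProb K l p B B') A A') :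
    ∀ A ∈ K,
      ∑ A' ∈ K, ((1 / ∑ B ∈ K, ∏ z ∈ B, (p z)⁻¹) * ∏ z ∈ A', (p z)⁻¹)
          * transProb K l p A' A
        = (1 / ∑ B ∈ K, ∏ z ∈ B, (p z)⁻¹) * ∏ z ∈ A, (p z)⁻¹ :=
  toggleMarkovChain_stationary_general K l p hp
end

section
/- Let P be an n-element antichain, p ∈ (0,1), and let Q and π be the transition matrix and stationary distribution of the rowmotion Markov chain on 2^P with all probabilities equal to p. For c > 1/2 and t = ⌈(1/2) log_{1/p} n + c⌉ (any integer t ≥ (1/2) log_{1/p} n + c), we have max_{x ⊆ P} d_TV(Q^t(x,·), π) ≤ (1/2)(e^{p^{2c−1}} − 1)^{1/2}. -/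
open Finset

variable {α : Type*} [Fintype α] [DecidableEq α]

/-- The transition matrix of the rowmotion Markov chain on the Boolean lattice `2^P`. -/
noncomputable def Qmat (p : ℝ) (I I' : Finset α) : ℝ :=
  if univ \ I' ⊆ I then p ^ (univ \ I').card * (1 - p) ^ (I ∩ I').card else 0

/-- One step of the rowmotion Markov chain on `2^P` applied to a distribution `μ`. -/
noncomputable def qStep (p : ℝ) (μ : Finset α → ℝ) : Finset α → ℝ :=
  fun A' => ∑ A : Finset α, μ A * Qmat p A A'

/-- The stationary distribution `π(A) = p^{-|A|} / (1 + 1/p)^n` on `2^P`. -/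
noncomputable def statDist (p : ℝ) (n : ℕ) (A : Finset α) : ℝ :=
  (p⁻¹) ^ A.card / (1 + 1 / p) ^ n

/-!
Rowmotion maps product measures to product measures: if the state contains each `a`
independently with probability `w a`, after one step it contains `a` independently with
probability `1 - p * w a`. So from a point mass the law after `t` steps is the product
measure with probabilities `1/(1+p) + (-p)^t (δ_a - 1/(1+p))`, while `π` is the product
measure with all probabilities `1/(1+p)`. The χ²-distance between product measures
factorizes and each factor is at most `1 + p^(2t-1)`, so by Cauchy–Schwarz
`(2 d_TV)² ≤ (1 + p^(2t-1))^n - 1 ≤ exp (n p^(2t-1)) - 1`, and the choice of `t` gives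
`n p^(2t-1) ≤ p^(2c-1)`.
-/

noncomputable def bernoulliProd (w : α → ℝ) (A : Finset α) : ℝ :=
  ∏ a, if a ∈ A then w a else 1 - w a

theorem prod_ite_mem_eq_prod_mul_prod_compl {M : Type*} [CommMonoid M] (A : Finset α)
    (F G : α → M) :
    ∏ a, (if a ∈ A then F a else G a) = (∏ a ∈ A, F a) * ∏ a ∈ Aᶜ, G a := by
  rw [prod_ite, filter_mem_eq_inter, univ_inter, filter_not, filter_mem_eq_inter, univ_inter,
    compl_eq_univ_sdiff]

theorem sum_prod_ite_mem {R : Type*} [CommSemiring R] (F G : α → R) :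
    ∑ A : Finset α, ∏ a, (if a ∈ A then F a else G a) = ∏ a, (F a + G a) := by
  simp only [Fintype.prod_add, prod_ite_mem_eq_prod_mul_prod_compl]

theorem sum_bernoulliProd (w : α → ℝ) : ∑ A, bernoulliProd w A = 1 := by
  simp [bernoulliProd, sum_prod_ite_mem]

theorem bernoulliProd_pos {w : α → ℝ} (hw : ∀ a, 0 < w a ∧ w a < 1) (A : Finset α) :
    0 < bernoulliProd w A :=
  prod_pos fun a _ => by split_ifs <;> linarith [hw a]

theorem bernoulliProd_indicator (x : Finset α) :
    bernoulliProd (fun a => if a ∈ x then 1 else 0) = fun B => if B = x then 1 else 0 := by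
  funext B
  split_ifs with hB
  · subst hB
    exact prod_eq_one fun a _ => by by_cases h : a ∈ B <;> simp [h]
  · obtain ⟨a, ha⟩ : ∃ a, ¬(a ∈ B ↔ a ∈ x) := by
      by_contra! h
      exact hB (ext h)
    exact prod_eq_zero (mem_univ a) (by by_cases a ∈ B <;> simp_all)

theorem Qmat_eq_prod (p : ℝ) (A A' : Finset α) :
    Qmat p A A' = ∏ a, if a ∈ A then (if a ∈ A' then 1 - p else p)
      else (if a ∈ A' then 1 else 0) := by
  unfold Qmat
  split_ifs with h
  · have hcompl : ∀ a ∈ Aᶜ, (if a ∈ A' then (1 : ℝ) else 0) = 1 := fun a ha => by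
      by_contra hA'
      exact mem_compl.1 ha (h (by simp_all))
    have hsdiff : A.filter (· ∉ A') = univ \ A' := by
      ext a
      have := @h a
      simp only [mem_filter, mem_sdiff, mem_univ, true_and] at this ⊢
      tauto
    rw [prod_ite_mem_eq_prod_mul_prod_compl, prod_congr rfl hcompl, prod_const_one, mul_one,
      prod_ite, prod_const, prod_const, hsdiff, filter_mem_eq_inter, mul_comm]
  · obtain ⟨a, ha, haA⟩ := not_subset.1 h
    exact (prod_eq_zero (mem_univ a) (by simp [haA, (mem_sdiff.1 ha).2])).symm

theorem qStep_bernoulliProd (p : ℝ) (w : α → ℝ) :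
    qStep p (bernoulliProd w) = bernoulliProd (fun a => 1 - p * w a) := by
  funext A'
  have hterm : ∀ A, bernoulliProd w A * Qmat p A A' =
      ∏ a, if a ∈ A then w a * (if a ∈ A' then 1 - p else p)
        else (1 - w a) * (if a ∈ A' then 1 else 0) := fun A => by
    rw [Qmat_eq_prod, bernoulliProd, ← prod_mul_distrib]
    exact prod_congr rfl fun a _ => by split_ifs <;> ring
  change ∑ A, bernoulliProd w A * Qmat p A A' = _
  simp_rw [hterm]
  rw [sum_prod_ite_mem, bernoulliProd]
  exact prod_congr rfl fun a _ => by split_ifs <;> ring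

noncomputable def rowmotionProb (p : ℝ) (t : ℕ) (δ : ℝ) : ℝ :=
  (1 + p)⁻¹ + (-p) ^ t * (δ - (1 + p)⁻¹)

theorem iterate_qStep_bernoulliProd {p : ℝ} (hp : 1 + p ≠ 0) (w : α → ℝ) (t : ℕ) :
    (qStep p)^[t] (bernoulliProd w) = bernoulliProd (fun a => rowmotionProb p t (w a)) := by
  induction t with
  | zero => simp [rowmotionProb]
  | succ t ih =>
    rw [Function.iterate_succ_apply', ih, qStep_bernoulliProd]
    congr 1
    funext a
    simp only [rowmotionProb]
    field_simp
    ring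

theorem statDist_eq_bernoulliProd {p : ℝ} (hp : 0 < p) :
    statDist p (Fintype.card α) = bernoulliProd (fun _ : α => (1 + p)⁻¹) := by
  funext A
  have hcompl : 1 - (1 + p)⁻¹ = p * (1 + p)⁻¹ := by field_simp; ring
  rw [statDist, bernoulliProd, prod_ite_mem_eq_prod_mul_prod_compl, prod_const, prod_const, hcompl,
    ← card_compl_add_card A]
  have hbase : 1 + 1 / p = (1 + p) * p⁻¹ := by field_simp; ring
  rw [hbase, pow_add, mul_pow, mul_pow, mul_pow]
  simp only [inv_pow]
  field_simp

theorem sum_sq_div_bernoulliProd (w v : α → ℝ) :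
    ∑ A, bernoulliProd w A ^ 2 / bernoulliProd v A =
      ∏ a, (w a ^ 2 / v a + (1 - w a) ^ 2 / (1 - v a)) := by
  rw [← sum_prod_ite_mem]
  refine sum_congr rfl fun A _ => ?_
  rw [bernoulliProd, bernoulliProd, ← prod_pow, ← prod_div_distrib]
  exact prod_congr rfl fun a _ => by split_ifs <;> rfl

theorem sq_sum_abs_sub_le_sum_sq_div_sub_one {ι : Type*} [Fintype ι] {μ π : ι → ℝ}
    (hπ : ∀ i, 0 < π i) (hμ1 : ∑ i, μ i = 1) (hπ1 : ∑ i, π i = 1) :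
    (∑ i, |μ i - π i|) ^ 2 ≤ ∑ i, μ i ^ 2 / π i - 1 := by
  have hsedrakyan := sq_sum_div_le_sum_sq_div univ (fun i => |μ i - π i|) fun i _ => hπ i
  have hexpand : ∀ i, |μ i - π i| ^ 2 / π i = μ i ^ 2 / π i - 2 * μ i + π i := fun i => by
    field_simp [(hπ i).ne']
    rw [sq_abs]
    ring
  rw [hπ1, div_one] at hsedrakyan
  simp only [hexpand, sum_add_distrib, sum_sub_distrib, ← mul_sum, hμ1, hπ1] at hsedrakyan
  linarith

theorem sq_div_add_sq_div_one_sub {v : ℝ} (hv0 : v ≠ 0) (hv1 : v ≠ 1) (w : ℝ) :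
    w ^ 2 / v + (1 - w) ^ 2 / (1 - v) = 1 + (w - v) ^ 2 / (v * (1 - v)) := by
  have : 1 - v ≠ 0 := sub_ne_zero.2 hv1.symm
  field_simp
  ring

theorem sq_sub_inv_one_add_div_le {p δ : ℝ} (hp0 : 0 < p) (hp1 : p ≤ 1)
    (hδ : δ = 0 ∨ δ = 1) :
    (δ - (1 + p)⁻¹) ^ 2 / ((1 + p)⁻¹ * (1 - (1 + p)⁻¹)) ≤ p⁻¹ := by
  have h1p : 1 + p ≠ 0 := by positivity
  rcases hδ with rfl | rfl
  · field_simp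
    ring_nf
    rw [mul_inv_cancel₀ hp0.ne']
  · field_simp
    nlinarith

theorem rowmotionProb_chiSq_le {p δ : ℝ} (hp0 : 0 < p) (hp1 : p ≤ 1) (hδ : δ = 0 ∨ δ = 1)
    (t : ℕ) :
    rowmotionProb p t δ ^ 2 / (1 + p)⁻¹ +
        (1 - rowmotionProb p t δ) ^ 2 / (1 - (1 + p)⁻¹) ≤ 1 + p ^ (2 * t) / p := by
  have hv1 : (1 + p)⁻¹ ≠ 1 := (inv_lt_one_of_one_lt₀ (by linarith)).ne
  have hpow : ((-p) ^ t) ^ 2 = p ^ (2 * t) := by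
    rw [← pow_mul, mul_comm, pow_mul, neg_sq, ← pow_mul]
  rw [sq_div_add_sq_div_one_sub (by positivity) hv1, add_le_add_iff_left, rowmotionProb,
    add_sub_cancel_left, mul_pow, hpow, mul_div_assoc, div_eq_mul_inv (p ^ _)]
  exact mul_le_mul_of_nonneg_left (sq_sub_inv_one_add_div_le hp0 hp1 hδ) (by positivity)

theorem natCast_mul_pow_le_rpow_of_logb_le {p c : ℝ} (hp0 : 0 < p) (hp1 : p < 1) {n t : ℕ}
    (ht : 1 / 2 * Real.logb (1 / p) n + c ≤ t) : n * p ^ (2 * t) ≤ p ^ (2 * c) := by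
  rcases n.eq_zero_or_pos with rfl | hn
  · simpa using Real.rpow_nonneg hp0.le _
  have hn' : (n : ℝ) = p ^ Real.logb p n := (Real.rpow_logb hp0 hp1.ne (by positivity)).symm
  rw [one_div p, Real.logb_inv_base] at ht
  rw [hn', ← Real.rpow_natCast, ← Real.rpow_add hp0]
  exact Real.rpow_le_rpow_of_exponent_ge hp0 hp1.le (by push_cast; linarith)

theorem boolean_cutoff_upper_bound_general (p : ℝ) (hp : 0 < p ∧ p < 1)
    (c : ℝ) (t : ℕ)
    (ht : (1 / 2) * Real.logb (1 / p) (Fintype.card α) + c ≤ (t : ℝ)) :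
    ∀ x : Finset α,
      (1 / 2) * ∑ A : Finset α,
          |(qStep p)^[t] (fun B => if B = x then (1 : ℝ) else 0) A
            - statDist p (Fintype.card α) A|
        ≤ (1 / 2) * Real.sqrt (Real.exp (p ^ (2 * c - 1)) - 1) := by
  obtain ⟨hp0, hp1⟩ := hp
  intro x
  have hv : 0 < (1 + p)⁻¹ ∧ (1 + p)⁻¹ < 1 :=
    ⟨by positivity, inv_lt_one_of_one_lt₀ (by linarith)⟩
  rw [← bernoulliProd_indicator, iterate_qStep_bernoulliProd (by positivity),
    statDist_eq_bernoulliProd hp0]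
  set μ := bernoulliProd fun a => rowmotionProb p t (if a ∈ x then 1 else 0)
  set π := bernoulliProd fun _ : α => (1 + p)⁻¹
  have hchiSq : (∑ A, |μ A - π A|) ^ 2 ≤ Real.exp (p ^ (2 * c - 1)) - 1 :=
    calc _ ≤ ∑ A, μ A ^ 2 / π A - 1 :=
          sq_sum_abs_sub_le_sum_sq_div_sub_one (bernoulliProd_pos fun _ => hv)
            (sum_bernoulliProd _) (sum_bernoulliProd _)
      _ ≤ ∏ _a : α, (1 + p ^ (2 * t) / p) - 1 := by
          rw [sum_sq_div_bernoulliProd]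
          refine sub_le_sub_right (prod_le_prod (fun a _ => ?_) fun a _ =>
            rowmotionProb_chiSq_le hp0 hp1.le (by split_ifs <;> simp) t) _
          have := sub_pos.2 hv.2
          positivity
      _ ≤ Real.exp (Fintype.card α * (p ^ (2 * t) / p)) - 1 := by
          grw [Real.prod_one_add_le_exp_sum _ fun _ => by positivity]
          simp
      _ ≤ Real.exp (p ^ (2 * c - 1)) - 1 := by
          rw [Real.rpow_sub hp0, Real.rpow_one, ← mul_div_assoc]
          gcongr
          exact natCast_mul_pow_le_rpow_of_logb_le hp0 hp1 ht
  linarith [Real.le_sqrt_of_sq_le hchiSq]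

/-- Cutoff upper bound: for `c > 1/2` and any integer number of steps
`t ≥ (1/2) log_{1/p} n + c`, the total variation distance of the rowmotion Markov
chain on the Boolean lattice `2^P` from stationarity, starting from any state,
is at most `(1/2)(e^{p^{2c-1}} - 1)^{1/2}`. -/
theorem boolean_cutoff_upper_bound [Nonempty α] (p : ℝ) (hp : 0 < p ∧ p < 1)
    (c : ℝ) (hc : 1 / 2 < c) (t : ℕ)
    (ht : (1 / 2) * Real.logb (1 / p) (Fintype.card α) + c ≤ (t : ℝ)) :
    ∀ x : Finset α,
      (1 / 2) * ∑ A : Finset α,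
          |(qStep p)^[t] (fun B => if B = x then (1 : ℝ) else 0) A
            - statDist p (Fintype.card α) A|
        ≤ (1 / 2) * Real.sqrt (Real.exp (p ^ (2 * c - 1)) - 1) :=
  boolean_cutoff_upper_bound_general p hp c t ht
end
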